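/- Let (X, D) be a locally compact, complete metric space, α > 1, and Ω ⊆ X an open set with D_α(Ω) ≠ ∅. Let (d_n)_{n∈ℕ} ⊆ D_α(Ω) and d ∈ D_α(Ω). Suppose the length functionals L_{d̄_n} Γ-converge to L_{d̄} on Lip([0,1]; Ω̄) with the topology of uniform convergence, i.e.: (liminf) for every sequence of Lipschitz curves γⁿ : [0,1] → Ω̄ converging uniformly to a Lipschitz curve γ one has L_{d̄}(γ) ≤ liminf_n L_{d̄_n}(γⁿ); (limsup) for every Lipschitz curve γ : [0,1] → Ω̄ there exist Lipschitz curves γⁿ converging uniformly to γ with limsup_n L_{d̄_n}(γⁿ) ≤ L_{d̄}(γ). Then d_n → d uniformly on compact subsets of Ω × Ω. -/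

import Mathlib

/-!
Every `d ∈ 𝒟_α(Ω)` is `α`-Lipschitz with respect to `D` in each variable, so the family `(d_n)` is
equi-Lipschitz and pointwise convergence `d_n(x, y) → d(x, y)` suffices.

For `limsup d_n(x, y) ≤ d(x, y)`, take a `d`-curve from `x` to `y` of length close to `d(x, y)`
and a recovery sequence for it: the `d̄_n`-lengths are eventually close to `d(x, y)` and the
endpoints converge to `x` and `y`.

For `d(x, y) ≤ liminf d_n(x, y)`, take `d_n`-curves from `x` to `y` of length close to `d_n(x, y)`,
reparametrized with constant speed. They are uniformly `D`-Lipschitz and start at `x`; by the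
argument of the Hopf–Rinow theorem (completeness and local compactness), points reachable from `x`
by `r`-Lipschitz curves form a totally bounded set, so by Arzelà–Ascoli a subsequence converges
uniformly to a curve `γ` from `x` to `y`. The Γ-liminf inequality gives
`d(x, y) ≤ L_{d̄}(γ) ≤ liminf d_n(x, y)`.
-/

open Filter MeasureTheory Set
open scoped ENNReal Topology

/-- Length of the curve `γ` on the interval `[a, b]`, with respect to the
(candidate) distance `d`, defined as a supremum over finite partitions. -/
noncomputable def pathLengthOn {E : Type*} (d : E → E → ℝ) (γ : ℝ → E) (a b : ℝ) : ℝ≥0∞ :=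
  ⨆ (k : ℕ) (t : Fin (k + 1) → ℝ) (_ : Monotone t) (_ : t 0 = a) (_ : t (Fin.last k) = b),
    ∑ i : Fin k, ENNReal.ofReal (d (γ (t i.succ)) (γ (t i.castSucc)))

/-- Length of the curve `γ : [0,1] → E` with respect to `d`. -/
noncomputable def pathLength {E : Type*} (d : E → E → ℝ) (γ : ℝ → E) : ℝ≥0∞ :=
  pathLengthOn d γ 0 1

/-- `d` is a distance on `E`. -/
def IsDistance {E : Type*} (d : E → E → ℝ) : Prop :=
  (∀ x y, d x y = d y x) ∧ (∀ x y z, d x z ≤ d x y + d y z) ∧ ∀ x y, d x y = 0 ↔ x = y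

/-- `γ : [0,1] → E` is a Lipschitz curve with respect to `d`. -/
def LipCurve {E : Type*} (d : E → E → ℝ) (γ : ℝ → E) : Prop :=
  ∃ K : ℝ, ∀ s ∈ Icc (0 : ℝ) 1, ∀ t ∈ Icc (0 : ℝ) 1, d (γ s) (γ t) ≤ K * |s - t|

/-- `(E, d)` is a length space: `d x y` is the infimum of lengths of Lipschitz
curves `γ : [0,1] → E` joining `x` to `y`. -/
def IsLengthDist {E : Type*} (d : E → E → ℝ) : Prop :=
  ∀ x y : E, ENNReal.ofReal (d x y) =
    ⨅ (γ : ℝ → E) (_ : LipCurve d γ) (_ : γ 0 = x) (_ : γ 1 = y), pathLength d γ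

/-- `d ∈ 𝒟_α(Ω)` : `d` is a distance on `Ω` making it a length space and satisfying
`α⁻¹ D ≤ d ≤ α D`. -/
def MemD {X : Type*} [MetricSpace X] (α : ℝ) (Ω : Set X) (d : Ω → Ω → ℝ) : Prop :=
  IsDistance d ∧ IsLengthDist d ∧
    ∀ x y : Ω, α⁻¹ * dist (x : X) (y : X) ≤ d x y ∧ d x y ≤ α * dist (x : X) (y : X)

/-- Uniform convergence `dn → d` on compact subsets of `E × E`. -/
def TendstoUnifCompactly {E : Type*} [TopologicalSpace E]
    (dn : ℕ → E → E → ℝ) (d : E → E → ℝ) : Prop :=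
  ∀ K : Set (E × E), IsCompact K → ∀ ε : ℝ, 0 < ε →
    ∃ N : ℕ, ∀ n ≥ N, ∀ p ∈ K, |dn n p.1 p.2 - d p.1 p.2| < ε

/-- `e` is a continuous extension of `d : Ω → Ω → ℝ` to the closure of `Ω`. -/
def IsContExt {X : Type*} [MetricSpace X] (Ω : Set X) (d : Ω → Ω → ℝ)
    (e : closure Ω → closure Ω → ℝ) : Prop :=
  Continuous (fun p : closure Ω × closure Ω => e p.1 p.2) ∧
    ∀ x y : Ω, e ⟨x, subset_closure x.2⟩ ⟨y, subset_closure y.2⟩ = d x y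

/-- `(E, d)` is a geodesic space: any two points are joined by a constant-speed curve
`γ : [0,1] → E` whose length on each subinterval `[t,s]` equals `d (γ t) (γ s)`. -/
def IsGeodesicDist {E : Type*} (d : E → E → ℝ) : Prop :=
  ∀ x y : E, ∃ γ : ℝ → E, γ 0 = x ∧ γ 1 = y ∧
    (∀ t s : ℝ, 0 ≤ t → t ≤ s → s ≤ 1 →
      pathLengthOn d γ t s = pathLength d γ * ENNReal.ofReal (s - t)) ∧
    ∀ t s : ℝ, 0 ≤ t → t ≤ s → s ≤ 1 →
      pathLengthOn d γ t s = ENNReal.ofReal (d (γ t) (γ s))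

/-- Uniform convergence on `[0,1]` of a sequence of curves. -/
def UnifConvCurves {E : Type*} [MetricSpace E] (γn : ℕ → ℝ → E) (γ : ℝ → E) : Prop :=
  ∀ ε : ℝ, 0 < ε → ∃ N : ℕ, ∀ n ≥ N, ∀ t ∈ Icc (0 : ℝ) 1, dist (γn n t) (γ t) < ε

/-- Γ-convergence of the length functionals `L_{dn}` to `L_d` on the space of
Lipschitz curves `[0,1] → E` with the topology of uniform convergence. -/
def GammaConvLengths {E : Type*} [MetricSpace E] (dn : ℕ → E → E → ℝ) (d : E → E → ℝ) : Prop :=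
  (∀ (γn : ℕ → ℝ → E) (γ : ℝ → E),
      (∀ n, LipCurve (fun x y : E => dist x y) (γn n)) →
      LipCurve (fun x y : E => dist x y) γ → UnifConvCurves γn γ →
      pathLength d γ ≤ liminf (fun n => pathLength (dn n) (γn n)) atTop) ∧
  ∀ γ : ℝ → E, LipCurve (fun x y : E => dist x y) γ →
    ∃ γn : ℕ → ℝ → E, (∀ n, LipCurve (fun x y : E => dist x y) (γn n)) ∧
      UnifConvCurves γn γ ∧
      limsup (fun n => pathLength (dn n) (γn n)) atTop ≤ pathLength d γ

section LipCurveWith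

variable {E : Type*} {d : E → E → ℝ} {γ : ℝ → E} {K : ℝ}

def LipCurveWith (d : E → E → ℝ) (K : ℝ) (γ : ℝ → E) : Prop :=
  ∀ s ∈ Icc (0 : ℝ) 1, ∀ t ∈ Icc (0 : ℝ) 1, d (γ s) (γ t) ≤ K * |s - t|

lemma LipCurveWith.lipCurve (h : LipCurveWith d K γ) : LipCurve d γ := ⟨K, h⟩

lemma LipCurveWith.mono (h : LipCurveWith d K γ) {K' : ℝ} (hK : K ≤ K') :
    LipCurveWith d K' γ := fun s hs t ht =>
  (h s hs t ht).trans (mul_le_mul_of_nonneg_right hK (abs_nonneg _))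

lemma LipCurveWith.nonneg (h : LipCurveWith d K γ) (hd : ∀ x y, 0 ≤ d x y) : 0 ≤ K := by
  simpa using (hd _ _).trans (h 1 (by simp) 0 (by simp))

lemma LipCurveWith.rescale (h : LipCurveWith d K γ) {c : ℝ} (hc : c ∈ Icc (0 : ℝ) 1) :
    LipCurveWith d (K * c) (fun u => γ (c * u)) := by
  have hmem : ∀ u ∈ Icc (0 : ℝ) 1, c * u ∈ Icc (0 : ℝ) 1 := fun u hu =>
    ⟨mul_nonneg hc.1 hu.1, mul_le_one₀ hc.2 hu.1 hu.2⟩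
  intro s hs t ht
  calc d (γ (c * s)) (γ (c * t)) ≤ K * |c * s - c * t| := h _ (hmem s hs) _ (hmem t ht)
    _ = K * c * |s - t| := by rw [← mul_sub, abs_mul, abs_of_nonneg hc.1, mul_assoc]

lemma LipCurveWith.map {E' : Type*} {d' : E' → E' → ℝ} {f : E → E'} {C : ℝ} (hC : 0 ≤ C)
    (hf : ∀ x y, d' (f x) (f y) ≤ C * d x y) (h : LipCurveWith d K γ) :
    LipCurveWith d' (C * K) (fun t => f (γ t)) := fun s hs t ht =>
  calc d' (f (γ s)) (f (γ t)) ≤ C * d (γ s) (γ t) := hf _ _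
    _ ≤ C * (K * |s - t|) := mul_le_mul_of_nonneg_left (h s hs t ht) hC
    _ = C * K * |s - t| := (mul_assoc _ _ _).symm

end LipCurveWith

lemma ofReal_le_pathLength {E : Type*} (d : E → E → ℝ) (γ : ℝ → E) :
    ENNReal.ofReal (d (γ 1) (γ 0)) ≤ pathLength d γ := by
  refine le_iSup_of_le 1 (le_iSup_of_le (fun i : Fin 2 => (i : ℝ)) ?_)
  refine le_iSup_of_le (fun i j hij => by simpa using hij) ?_
  refine le_iSup_of_le (by simp) (le_iSup_of_le (by simp) ?_)
  simp

section WithDistance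

variable {E : Type*} {d : E → E → ℝ}

lemma IsDistance.nonneg (hd : IsDistance d) (x y : E) : 0 ≤ d x y := by
  have h := hd.2.1 x y x
  rw [hd.1 y x, (hd.2.2 x x).2 rfl] at h
  linarith

structure WithDistance (hd : IsDistance d) where
  of ::
  val : E

instance (hd : IsDistance d) : MetricSpace (WithDistance hd) where
  dist p q := d p.val q.val
  dist_self p := (hd.2.2 _ _).2 rfl
  dist_comm p q := hd.1 _ _
  dist_triangle p q r := hd.2.1 _ _ _
  eq_of_dist_eq_zero {p q} h := by cases p; cases q; exact congrArg _ ((hd.2.2 _ _).1 h)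
  edist_dist _ _ := rfl

end WithDistance

lemma sum_le_pathLengthOn {E : Type*} (d : E → E → ℝ) (γ : ℝ → E) {a b : ℝ} {k : ℕ}
    {T : ℕ → ℝ} (hT : Monotone T) (h0 : T 0 = a) (hk : T k = b) :
    ∑ i ∈ Finset.range k, ENNReal.ofReal (d (γ (T (i + 1))) (γ (T i))) ≤
      pathLengthOn d γ a b := by
  refine le_iSup_of_le k (le_iSup_of_le (fun i : Fin (k + 1) => T i) ?_)
  refine le_iSup_of_le (fun i j hij => hT hij) (le_iSup_of_le h0 (le_iSup_of_le hk ?_))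
  rw [← Fin.sum_univ_eq_sum_range (fun i => ENNReal.ofReal (d (γ (T (i + 1))) (γ (T i))))]
  rfl

lemma pathLengthOn_eq_eVariationOn {E : Type*} {d : E → E → ℝ} (hd : IsDistance d)
    (γ : ℝ → E) {a b : ℝ} (hab : a ≤ b) :
    pathLengthOn d γ a b = eVariationOn (WithDistance.of ∘ γ : ℝ → WithDistance hd) (Icc a b) := by
  apply le_antisymm
  · refine iSup_le fun k => iSup_le fun t => iSup_le fun ht => iSup_le fun h0 =>
      iSup_le fun hk => ?_
    let u : ℕ → ℝ := fun j => t ⟨min j k, by omega⟩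
    have hu : Monotone u := fun i j hij => ht (Fin.mk_le_mk.2 (min_le_min_right k hij))
    have hus : ∀ j, u j ∈ Icc a b := fun j =>
      ⟨h0 ▸ ht (Fin.zero_le _), hk ▸ ht (Fin.le_last _)⟩
    calc ∑ i : Fin k, ENNReal.ofReal (d (γ (t i.succ)) (γ (t i.castSucc)))
        = ∑ i ∈ Finset.range k,
            edist (WithDistance.of (hd := hd) (γ (u (i + 1)))) (.of (γ (u i))) := by
          rw [← Fin.sum_univ_eq_sum_range]
          refine Finset.sum_congr rfl fun i _ => ?_
          simp only [u, Nat.min_eq_left i.isLt, Nat.min_eq_left i.isLt.le]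
          rfl
      _ ≤ _ := eVariationOn.sum_le hu hus
  · refine iSup_le fun ⟨n, u, hu, hus⟩ => ?_
    -- pad the chain `u` with the endpoints `a` and `b`
    let T : ℕ → ℝ := fun j => if j = 0 then a else if j ≤ n + 1 then u (j - 1) else b
    have hT : Monotone T := by
      intro i j hij
      simp only [T]
      split_ifs <;>
        first
        | omega | exact le_rfl | exact hab | exact hu (by omega)
        | exact (hus _).1 | exact (hus _).2
    have hsum := sum_le_pathLengthOn d γ (a := a) (b := b) hT (k := n + 2) (by simp [T])
      (by simp [T])
    rw [Finset.sum_range_succ', Finset.sum_range_succ] at hsum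
    refine le_trans ?_ ((le_add_right (le_add_right le_rfl)).trans hsum)
    change ∑ i ∈ Finset.range n, _ ≤ _
    refine (Finset.sum_congr rfl fun i hi => ?_).le
    have hi : i < n := Finset.mem_range.1 hi
    simp only [T, if_neg (Nat.succ_ne_zero _), if_pos (show i + 1 + 1 ≤ n + 1 by omega),
      if_pos (show i + 1 ≤ n + 1 by omega)]
    rfl

section LengthOfLipCurve

variable {E : Type*} {d : E → E → ℝ} {γ : ℝ → E} {K : ℝ}

lemma LipCurveWith.eVariationOn_le (hd : IsDistance d) (h : LipCurveWith d K γ) {s t : ℝ}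
    (hs : s ∈ Icc (0 : ℝ) 1) (ht : t ∈ Icc (0 : ℝ) 1) :
    eVariationOn (WithDistance.of ∘ γ : ℝ → WithDistance hd) (Icc 0 1 ∩ Icc s t) ≤
      ENNReal.ofReal (K * (t - s)) := by
  have hK : 0 ≤ K := h.nonneg hd.nonneg
  let f : ℝ → WithDistance hd := WithDistance.of ∘ γ
  have hlip : LipschitzOnWith K.toNNReal f (Icc 0 1) :=
    LipschitzOnWith.of_dist_le_mul fun u hu v hv => by
      rw [Real.coe_toNNReal K hK, Real.dist_eq]
      exact h u hu v hv
  calc eVariationOn f (Icc 0 1 ∩ Icc s t)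
      ≤ K.toNNReal * eVariationOn id (Icc 0 1 ∩ Icc s t) :=
        hlip.comp_eVariationOn_le (g := id) (mapsTo_id _ |>.mono_left inter_subset_left)
    _ = ENNReal.ofReal (K * (t - s)) := by
        rw [eVariationOn_id hs ht, ENNReal.ofReal_mul hK]
        rfl

lemma LipCurveWith.pathLength_le (hd : IsDistance d) (h : LipCurveWith d K γ) :
    pathLength d γ ≤ ENNReal.ofReal K := by
  have h01 : (0 : ℝ) ∈ Icc (0 : ℝ) 1 ∧ (1 : ℝ) ∈ Icc (0 : ℝ) 1 := by simp
  simpa [pathLength, pathLengthOn_eq_eVariationOn hd γ zero_le_one] using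
    h.eVariationOn_le hd h01.1 h01.2

end LengthOfLipCurve

section ConstantSpeed

lemma HasUnitSpeedOn.dist_le {Y : Type*} [PseudoMetricSpace Y] {g : ℝ → Y} {s : Set ℝ}
    (hg : HasUnitSpeedOn g s) {u v : ℝ} (hu : u ∈ s) (hv : v ∈ s) : dist (g u) (g v) ≤ |u - v| := by
  wlog huv : u ≤ v generalizing u v
  · rw [dist_comm, abs_sub_comm]
    exact this hv hu (le_of_not_ge huv)
  have hle := eVariationOn.edist_le g (s := s ∩ Icc u v) ⟨hu, le_rfl, huv⟩ ⟨hv, huv, le_rfl⟩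
  rw [hg hu hv, edist_dist, NNReal.coe_one, one_mul,
    ENNReal.ofReal_le_ofReal_iff (sub_nonneg.2 huv)] at hle
  rwa [abs_sub_comm, abs_of_nonneg (sub_nonneg.2 huv)]

variable {E : Type*} {d : E → E → ℝ} {γ : ℝ → E} {K : ℝ}

lemma LipCurveWith.continuousOn_variationOnFromTo (hd : IsDistance d) (h : LipCurveWith d K γ)
    (hf : LocallyBoundedVariationOn (WithDistance.of ∘ γ : ℝ → WithDistance hd) (Icc 0 1)) :
    ContinuousOn (variationOnFromTo (WithDistance.of ∘ γ : ℝ → WithDistance hd) (Icc 0 1) 0)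
      (Icc 0 1) := by
  have hK : 0 ≤ K := h.nonneg hd.nonneg
  refine (LipschitzOnWith.of_le_add_mul' K fun u hu v hv => ?_).continuousOn
  rw [← variationOnFromTo.add hf (left_mem_Icc.2 zero_le_one) hv hu, Real.dist_eq,
    add_le_add_iff_left]
  rcases le_total v u with hvu | huv
  · rw [variationOnFromTo.eq_of_le _ _ hvu, abs_of_nonneg (sub_nonneg.2 hvu)]
    exact ENNReal.toReal_le_of_le_ofReal (by nlinarith) (h.eVariationOn_le hd hv hu)
  · exact (variationOnFromTo.nonpos_of_ge _ _ huv).trans (by positivity)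

lemma LipCurve.exists_lipCurveWith_pathLength (hd : IsDistance d) (hγ : LipCurve d γ) :
    ∃ γ' : ℝ → E, γ' 0 = γ 0 ∧ γ' 1 = γ 1 ∧ LipCurveWith d (pathLength d γ).toReal γ' := by
  obtain ⟨K, hK⟩ : ∃ K, LipCurveWith d K γ := hγ
  let f : ℝ → WithDistance hd := WithDistance.of ∘ γ
  have h0 : (0 : ℝ) ∈ Icc (0 : ℝ) 1 := left_mem_Icc.2 zero_le_one
  have h1 : (1 : ℝ) ∈ Icc (0 : ℝ) 1 := right_mem_Icc.2 zero_le_one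
  have hvar : eVariationOn f (Icc 0 1) = pathLength d γ :=
    (pathLengthOn_eq_eVariationOn hd γ zero_le_one).symm
  have hf : LocallyBoundedVariationOn f (Icc 0 1) := fun _ _ _ _ =>
    ne_top_of_le_ne_top (hvar ▸ ne_top_of_le_ne_top ENNReal.ofReal_ne_top (hK.pathLength_le hd))
      (eVariationOn.mono f inter_subset_left)
  set V := variationOnFromTo f (Icc 0 1) 0
  set ℓ := (pathLength d γ).toReal
  have hV0 : V 0 = 0 := variationOnFromTo.self f _ 0
  have hV1 : V 1 = ℓ := by
    rw [show V 1 = _ from variationOnFromTo.eq_of_le _ _ zero_le_one, inter_self, hvar]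
  have himage : Icc 0 ℓ ⊆ V '' Icc 0 1 :=
    calc Icc 0 ℓ = Icc (V 0) (V 1) := by rw [hV0, hV1]
      _ ⊆ V '' Icc 0 1 :=
        intermediate_value_Icc zero_le_one (hK.continuousOn_variationOnFromTo hd hf)
  let g := naturalParameterization f (Icc 0 1) 0
  have hgV : ∀ t ∈ Icc (0 : ℝ) 1, g (V t) = f t := fun t ht =>
    edist_eq_zero.1 (edist_naturalParameterization_eq_zero hf h0 ht)
  have hg := has_unit_speed_naturalParameterization f hf h0
  have hℓ : 0 ≤ ℓ := ENNReal.toReal_nonneg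
  refine ⟨fun u => (g (ℓ * u)).val, ?_, ?_, fun u hu v hv => ?_⟩
  · calc (g (ℓ * 0)).val = (g (V 0)).val := by rw [mul_zero, hV0]
      _ = γ 0 := by rw [hgV 0 h0]; rfl
  · calc (g (ℓ * 1)).val = (g (V 1)).val := by rw [mul_one, hV1]
      _ = γ 1 := by rw [hgV 1 h1]; rfl
  · have hmem : ∀ w ∈ Icc (0 : ℝ) 1, ℓ * w ∈ Icc 0 ℓ := fun w hw =>
      ⟨mul_nonneg hℓ hw.1, mul_le_of_le_one_right hℓ hw.2⟩
    calc d (g (ℓ * u)).val (g (ℓ * v)).val ≤ |ℓ * u - ℓ * v| :=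
          hg.dist_le (himage (hmem u hu)) (himage (hmem v hv))
      _ = ℓ * |u - v| := by rw [← mul_sub, abs_mul, abs_of_nonneg hℓ]

lemma IsLengthDist.exists_lipCurveWith (hd : IsDistance d) (hl : IsLengthDist d) {x y : E}
    {L : ℝ} (hL : d x y < L) : ∃ γ : ℝ → E, γ 0 = x ∧ γ 1 = y ∧ LipCurveWith d L γ := by
  have hlt := (ENNReal.ofReal_lt_ofReal_iff ((hd.nonneg x y).trans_lt hL)).2 hL
  rw [hl x y] at hlt
  simp only [iInf_lt_iff] at hlt
  obtain ⟨γ, hγ, rfl, rfl, hlen⟩ := hlt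
  obtain ⟨γ', h0, h1, hγ'⟩ := hγ.exists_lipCurveWith_pathLength hd
  exact ⟨γ', h0, h1, hγ'.mono (ENNReal.toReal_le_of_le_ofReal
    ((hd.nonneg _ _).trans hL.le) hlen.le)⟩

end ConstantSpeed

section LipReach

variable {Y : Type*} [MetricSpace Y]

def lipReach (x : Y) (r : ℝ) : Set Y :=
  {z | ∃ γ : ℝ → Y, γ 0 = x ∧ γ 1 = z ∧ LipCurveWith dist r γ}

lemma lipReach_mono (x : Y) {r r' : ℝ} (h : r ≤ r') : lipReach x r ⊆ lipReach x r' :=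
  fun _ ⟨γ, h0, h1, hγ⟩ => ⟨γ, h0, h1, hγ.mono h⟩

lemma lipReach_zero_subset (x : Y) : lipReach x 0 ⊆ {x} := by
  rintro _ ⟨γ, rfl, rfl, hγ⟩
  exact dist_le_zero.1 (by simpa using hγ 1 (by simp) 0 (by simp))

lemma LipCurveWith.mem_lipReach {γ : ℝ → Y} {r : ℝ} (hγ : LipCurveWith dist r γ) {t : ℝ}
    (ht : t ∈ Icc (0 : ℝ) 1) : γ t ∈ lipReach (γ 0) (r * t) :=
  ⟨fun u => γ (t * u), by simp, by simp, hγ.rescale ht⟩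

lemma exists_mem_lipReach_dist_le {x z : Y} {r r' : ℝ} (hz : z ∈ lipReach x r) (hr' : 0 ≤ r')
    (hrr' : r' ≤ r) : ∃ z' ∈ lipReach x r', dist z z' ≤ r - r' := by
  obtain ⟨γ, rfl, rfl, hγ⟩ := hz
  rcases (hr'.trans hrr').eq_or_lt with hr | hr
  · obtain rfl : r' = r := le_antisymm hrr' (hr ▸ hr')
    exact ⟨γ 1, ⟨γ, rfl, rfl, hγ⟩, by simp⟩
  have ht : r' / r ∈ Icc (0 : ℝ) 1 := ⟨div_nonneg hr' hr.le, (div_le_one hr).2 hrr'⟩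
  refine ⟨γ (r' / r), by simpa [mul_div_cancel₀ _ hr.ne'] using hγ.mem_lipReach ht, ?_⟩
  calc dist (γ 1) (γ (r' / r)) ≤ r * |1 - r' / r| := hγ 1 (by simp) _ ht
    _ = r - r' := by rw [abs_of_nonneg (by linarith [ht.2]), mul_sub, mul_div_cancel₀ _ hr.ne',
      mul_one]

lemma totallyBounded_lipReach_of_forall_lt (x : Y) {ρ : ℝ} (hρ : 0 ≤ ρ)
    (h : ∀ r ∈ Ico 0 ρ, TotallyBounded (lipReach x r)) : TotallyBounded (lipReach x ρ) := by
  rcases hρ.eq_or_lt with rfl | hρ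
  · exact (finite_singleton x).totallyBounded.subset (lipReach_zero_subset x)
  rw [Metric.totallyBounded_iff]
  intro ε hε
  set r := max 0 (ρ - ε / 2)
  have hr : r ∈ Ico 0 ρ := ⟨le_max_left _ _, max_lt hρ (by linarith)⟩
  have hρr : ρ - r ≤ ε / 2 := by linarith [le_max_right 0 (ρ - ε / 2)]
  obtain ⟨t, ht, hcover⟩ := Metric.totallyBounded_iff.1 (h r hr) (ε / 2) (by positivity)
  refine ⟨t, ht, fun z hz => ?_⟩
  obtain ⟨z', hz', hzz'⟩ := exists_mem_lipReach_dist_le hz hr.1 hr.2.le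
  obtain ⟨y, hy, hz'y⟩ := mem_iUnion₂.1 (hcover hz')
  refine mem_iUnion₂.2 ⟨y, hy, ?_⟩
  rw [Metric.mem_ball] at hz'y ⊢
  linarith [dist_triangle z z' y]

lemma exists_pos_totallyBounded_lipReach_add [CompleteSpace Y] [LocallyCompactSpace Y] (x : Y)
    {ρ : ℝ} (hρ : 0 ≤ ρ) (h : TotallyBounded (lipReach x ρ)) :
    ∃ δ > 0, TotallyBounded (lipReach x (ρ + δ)) := by
  have hK : IsCompact (closure (lipReach x ρ)) := h.closure.isCompact_of_isClosed isClosed_closure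
  obtain ⟨K', hK', hsub⟩ := exists_compact_superset hK
  obtain ⟨δ, hδ, hthick⟩ := hK.exists_thickening_subset_open isOpen_interior hsub
  refine ⟨δ / 2, by positivity, hK'.totallyBounded.subset fun z hz => interior_subset (hthick ?_)⟩
  obtain ⟨z', hz', hzz'⟩ := exists_mem_lipReach_dist_le hz hρ (by linarith)
  exact Metric.mem_thickening_iff.2 ⟨z', subset_closure hz', by linarith⟩

theorem totallyBounded_lipReach [CompleteSpace Y] [LocallyCompactSpace Y] (x : Y) (r : ℝ) :
    TotallyBounded (lipReach x r) := by
  -- continuous induction on the radius, as in the proof of the Hopf–Rinow theorem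
  by_contra hr
  set S := {r | 0 ≤ r ∧ ¬TotallyBounded (lipReach x r)}
  have hS : S.Nonempty :=
    ⟨max r 0, le_max_right _ _, fun h => hr (h.subset (lipReach_mono x (le_max_left _ _)))⟩
  have hbdd : BddBelow S := ⟨0, fun _ h => h.1⟩
  have hρ : 0 ≤ sInf S := le_csInf hS fun _ h => h.1
  obtain ⟨δ, hδ, hTB⟩ := exists_pos_totallyBounded_lipReach_add x hρ
    (totallyBounded_lipReach_of_forall_lt x hρ fun r' hr' =>
      by_contra fun h => (csInf_le hbdd ⟨hr'.1, h⟩).not_gt hr'.2)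
  have : sInf S + δ ≤ sInf S := le_csInf hS fun s hs =>
    not_lt.1 fun hlt => hs.2 (hTB.subset (lipReach_mono x hlt.le))
  linarith

end LipReach

section ArzelaAscoli

open scoped BoundedContinuousFunction

variable {Y : Type*} [MetricSpace Y]

lemma UnifConvCurves.tendsto {γn : ℕ → ℝ → Y} {γ : ℝ → Y} (h : UnifConvCurves γn γ) {t : ℝ}
    (ht : t ∈ Icc (0 : ℝ) 1) : Tendsto (fun n => γn n t) atTop (𝓝 (γ t)) :=
  Metric.tendsto_atTop.2 fun ε hε => (h ε hε).imp fun _ hN n hn => hN n hn t ht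

lemma UnifConvCurves.lipCurveWith {γn : ℕ → ℝ → Y} {γ : ℝ → Y} {K : ℝ}
    (h : UnifConvCurves γn γ) (hγn : ∀ n, LipCurveWith dist K (γn n)) :
    LipCurveWith dist K γ := fun s hs t ht =>
  le_of_tendsto' ((h.tendsto hs).dist (h.tendsto ht)) fun n => hγn n s hs t ht

lemma LipCurveWith.lipschitzWith {γ : ℝ → Y} {K : ℝ} (h : LipCurveWith dist K γ) :
    LipschitzWith K.toNNReal (fun t : Icc (0 : ℝ) 1 => γ t) :=
  LipschitzWith.of_dist_le_mul fun s t => by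
    rw [Real.coe_toNNReal K (h.nonneg fun _ _ => dist_nonneg), Subtype.dist_eq, Real.dist_eq]
    exact h s s.2 t t.2

theorem exists_subseq_unifConvCurves [CompleteSpace Y] [LocallyCompactSpace Y]
    {f : ℕ → ℝ → Y} {x : Y} {K : ℝ} (h0 : ∀ n, f n 0 = x)
    (hf : ∀ n, LipCurveWith dist K (f n)) :
    ∃ φ : ℕ → ℕ, StrictMono φ ∧
      ∃ g : ℝ → Y, LipCurveWith dist K g ∧ UnifConvCurves (fun k => f (φ k)) g := by
  have hK : 0 ≤ K := (hf 0).nonneg fun _ _ => dist_nonneg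
  let F : ℕ → Icc (0 : ℝ) 1 →ᵇ Y := fun n =>
    BoundedContinuousFunction.mkOfCompact ⟨fun t => f n t, (hf n).lipschitzWith.continuous⟩
  have hT : IsCompact (closure (lipReach x K)) :=
    (totallyBounded_lipReach x K).closure.isCompact_of_isClosed isClosed_closure
  have hFT : ∀ (G : Icc (0 : ℝ) 1 →ᵇ Y) t, G ∈ range F → G t ∈ closure (lipReach x K) := by
    rintro _ t ⟨n, rfl⟩
    exact subset_closure (lipReach_mono x (mul_le_of_le_one_right hK t.2.2)
      (h0 n ▸ (hf n).mem_lipReach t.2))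
  have hequi : Equicontinuous ((↑) : range F → Icc (0 : ℝ) 1 → Y) :=
    (LipschitzWith.uniformEquicontinuous _ K.toNNReal
      fun ⟨_, n, hn⟩ => hn ▸ (hf n).lipschitzWith).equicontinuous
  obtain ⟨G, -, φ, hφ, hFG⟩ :=
    (BoundedContinuousFunction.arzela_ascoli _ hT _ hFT hequi).tendsto_subseq
      fun n => subset_closure (mem_range_self n)
  have hconv : UnifConvCurves (fun k => f (φ k)) (IccExtend zero_le_one G) := fun ε hε => by
    obtain ⟨N, hN⟩ := Metric.tendsto_atTop.1 hFG ε hε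
    refine ⟨N, fun n hn t ht => ?_⟩
    rw [IccExtend_of_mem _ _ ht]
    exact (BoundedContinuousFunction.dist_coe_le_dist ⟨t, ht⟩).trans_lt (hN n hn)
  exact ⟨φ, hφ, _, hconv.lipCurveWith fun k => hf (φ k), hconv⟩

end ArzelaAscoli

section ContinuousExtension

variable {X : Type*} [MetricSpace X] {Ω : Set X} {α : ℝ} {d : Ω → Ω → ℝ}
  {e : closure Ω → closure Ω → ℝ}

lemma denseRange_inclusion_closure : DenseRange (inclusion (subset_closure : Ω ⊆ closure Ω)) :=
  (denseRange_inclusion_iff subset_closure).2 subset_rfl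

lemma IsContExt.apply_inclusion (he : IsContExt Ω d e) (x y : Ω) :
    e (inclusion subset_closure x) (inclusion subset_closure y) = d x y :=
  he.2 x y

lemma IsContExt.pathLength_comp (he : IsContExt Ω d e) (γ : ℝ → Ω) :
    pathLength e (fun t => inclusion subset_closure (γ t)) = pathLength d γ := by
  simp only [pathLength, pathLengthOn, he.apply_inclusion]

lemma IsContExt.le_mul_dist (hd : MemD α Ω d) (he : IsContExt Ω d e) (p q : closure Ω) :
    e p q ≤ α * dist p q :=
  denseRange_inclusion_closure.induction_on₂ (p := fun p q => e p q ≤ α * dist p q)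
    (isClosed_le he.1 (continuous_const.mul continuous_dist))
    (fun x y => (he.apply_inclusion x y).trans_le (hd.2.2 x y).2) p q

lemma IsContExt.triangle (hd : IsDistance d) (he : IsContExt Ω d e) (p q r : closure Ω) :
    e p r ≤ e p q + e q r := by
  have hcont {f g : closure Ω × closure Ω × closure Ω → closure Ω} (hf : Continuous f)
      (hg : Continuous g) : Continuous fun z => e (f z) (g z) :=
    he.1.comp (hf.prodMk hg)
  refine denseRange_inclusion_closure.induction_on₃
    (p := fun p q r => e p r ≤ e p q + e q r) (isClosed_le ?_ ?_) (fun x y z => ?_) p q r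
  · exact hcont continuous_fst (continuous_snd.comp continuous_snd)
  · exact (hcont continuous_fst (continuous_fst.comp continuous_snd)).add
      (hcont (continuous_fst.comp continuous_snd) (continuous_snd.comp continuous_snd))
  · simp only [he.apply_inclusion]
    exact hd.2.1 x y z

lemma IsContExt.lt_of_pathLength_lt (hd : MemD α Ω d) (he : IsContExt Ω d e)
    {c : ℝ → closure Ω} {L : ℝ} (hc : pathLength e c < ENNReal.ofReal L) (x y : Ω) :
    d x y < α * dist (c 0) (inclusion subset_closure x) + L +
      α * dist (c 1) (inclusion subset_closure y) := by
  set ix := inclusion subset_closure x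
  set iy := inclusion subset_closure y
  have hchord : e (c 1) (c 0) < L :=
    (ENNReal.ofReal_lt_ofReal_iff'.1 ((ofReal_le_pathLength e c).trans_lt hc)).1
  have h1 := he.le_mul_dist hd iy (c 1)
  have h2 := he.le_mul_dist hd (c 0) ix
  rw [dist_comm] at h1
  calc d x y = e iy ix := by rw [he.apply_inclusion, hd.1.1]
    _ ≤ e iy (c 1) + e (c 1) (c 0) + e (c 0) ix := by
      linarith [he.triangle hd.1 iy (c 1) ix, he.triangle hd.1 (c 1) (c 0) ix]
    _ < _ := by linarith

lemma MemD.dist_le (hd : MemD α Ω d) (hα : 0 < α) (x y : Ω) : dist x y ≤ α * d x y :=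
  (inv_mul_le_iff₀ hα).1 (hd.2.2 x y).1

lemma MemD.lipCurveWith_inclusion (hd : MemD α Ω d) (hα : 0 < α) {γ : ℝ → Ω} {K : ℝ}
    (hγ : LipCurveWith d K γ) :
    LipCurveWith dist (α * K) (fun t => inclusion (subset_closure : Ω ⊆ closure Ω) (γ t)) :=
  hγ.map (f := inclusion subset_closure) hα.le fun x y => hd.dist_le hα x y

end ContinuousExtension

lemma GammaConvLengths.pathLength_le_liminf_comp {E : Type*} [MetricSpace E]
    {dn : ℕ → E → E → ℝ} {d : E → E → ℝ} (hG : GammaConvLengths dn d) {φ : ℕ → ℕ}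
    (hφ : StrictMono φ) {c : ℕ → ℝ → E} {g : ℝ → E}
    (hc : ∀ k, LipCurve (fun x y : E => dist x y) (c k))
    (hg : LipCurve (fun x y : E => dist x y) g) (hcg : UnifConvCurves c g) :
    pathLength d g ≤ liminf (fun k => pathLength (dn (φ k)) (c k)) atTop := by
  classical
  -- indices outside the range of `φ` are filled with the limit curve `g` itself
  let γ : ℕ → ℝ → E := fun m => if h : ∃ k, φ k = m then c h.choose else g
  have hγφ : ∀ k, γ (φ k) = c k := fun k => by
    have h : ∃ k', φ k' = φ k := ⟨k, rfl⟩
    simp only [γ, dif_pos h, hφ.injective h.choose_spec]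
  have hγ : ∀ m, LipCurve (fun x y : E => dist x y) (γ m) := fun m => by
    by_cases h : ∃ k, φ k = m
    · obtain ⟨k, rfl⟩ := h
      exact hγφ k ▸ hc k
    · simpa only [γ, dif_neg h] using hg
  have hγg : UnifConvCurves γ g := fun ε hε => by
    obtain ⟨N, hN⟩ := hcg ε hε
    refine ⟨φ N, fun m hm t ht => ?_⟩
    by_cases h : ∃ k, φ k = m
    · obtain ⟨k, rfl⟩ := h
      exact hγφ k ▸ hN k (hφ.le_iff_le.1 hm) t ht
    · simpa only [γ, dif_neg h, dist_self] using hε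
  calc pathLength d g ≤ liminf (fun m => pathLength (dn m) (γ m)) atTop :=
        hG.1 γ g hγ hg hγg
    _ ≤ liminf (fun k => pathLength (dn (φ k)) (γ (φ k))) atTop :=
        hφ.tendsto_atTop.liminf_le_liminf_comp
    _ = liminf (fun k => pathLength (dn (φ k)) (c k)) atTop := by simp only [hγφ]

section PointwiseConvergence

variable {X : Type*} [MetricSpace X] {Ω : Set X} {α : ℝ} {dn : ℕ → Ω → Ω → ℝ}
  {d : Ω → Ω → ℝ} {en : ℕ → closure Ω → closure Ω → ℝ} {e : closure Ω → closure Ω → ℝ}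

lemma eventually_lt_of_gammaConvLengths (hα : 0 < α) (hdn : ∀ n, MemD α Ω (dn n))
    (hd : MemD α Ω d) (hen : ∀ n, IsContExt Ω (dn n) (en n)) (he : IsContExt Ω d e)
    (hG : GammaConvLengths en e) (x y : Ω) {a : ℝ} (ha : d x y < a) :
    ∀ᶠ n in atTop, dn n x y < a := by
  obtain ⟨η, hη, rfl⟩ : ∃ η > 0, a = d x y + 4 * η := ⟨(a - d x y) / 4, by linarith, by ring⟩
  obtain ⟨γ, rfl, rfl, hγ⟩ :=
    hd.2.1.exists_lipCurveWith hd.1 (lt_add_of_pos_right (d x y) hη)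
  set c : ℝ → closure Ω := fun t => inclusion subset_closure (γ t)
  obtain ⟨γn, -, hconv, hlimsup⟩ := hG.2 c (hd.lipCurveWith_inclusion hα hγ).lipCurve
  have hlen : pathLength e c < ENNReal.ofReal (d (γ 0) (γ 1) + 2 * η) := by
    rw [he.pathLength_comp]
    refine (hγ.pathLength_le hd.1).trans_lt ((ENNReal.ofReal_lt_ofReal_iff ?_).2 (by linarith))
    linarith [hd.1.nonneg (γ 0) (γ 1)]
  have hends : ∀ᶠ n in atTop, ∀ t ∈ Icc (0 : ℝ) 1, dist (γn n t) (c t) < η / α :=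
    eventually_atTop.2 (hconv _ (by positivity))
  filter_upwards [eventually_lt_of_limsup_lt (hlimsup.trans_lt hlen), hends] with n hlen hends
  have h0 : α * dist (γn n 0) (inclusion subset_closure (γ 0)) < η :=
    (lt_div_iff₀' hα).1 (hends 0 (left_mem_Icc.2 zero_le_one))
  have h1 : α * dist (γn n 1) (inclusion subset_closure (γ 1)) < η :=
    (lt_div_iff₀' hα).1 (hends 1 (right_mem_Icc.2 zero_le_one))
  linarith [(hen n).lt_of_pathLength_lt (hdn n) hlen (γ 0) (γ 1)]

lemma exists_seq_lipCurveWith_pathLength_le (hα : 0 < α) (hdn : ∀ n, MemD α Ω (dn n))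
    (hen : ∀ n, IsContExt Ω (dn n) (en n)) (x y : Ω) :
    ∃ c : ℕ → ℝ → closure Ω, ∀ n, c n 0 = inclusion subset_closure x ∧
      c n 1 = inclusion subset_closure y ∧ LipCurveWith dist (α * (α * dist x y + 1)) (c n) ∧
      pathLength (en n) (c n) ≤ ENNReal.ofReal (dn n x y + 1 / (n + 1)) := by
  have hgeod (n : ℕ) := (hdn n).2.1.exists_lipCurveWith (hdn n).1
    (lt_add_of_pos_right (dn n x y) (Nat.one_div_pos_of_nat (α := ℝ) (n := n)))
  choose γ hγ0 hγ1 hγ using hgeod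
  refine ⟨fun n t => inclusion subset_closure (γ n t), fun n => ⟨by simp [hγ0], by simp [hγ1],
    ((hdn n).lipCurveWith_inclusion hα (hγ n)).mono ?_,
    ((hen n).pathLength_comp (γ n)).trans_le ((hγ n).pathLength_le (hdn n).1)⟩⟩
  have h1 : 1 / ((n : ℝ) + 1) ≤ 1 := (div_le_one (by positivity)).2 (by simp)
  refine mul_le_mul_of_nonneg_left (add_le_add ?_ h1) hα.le
  rw [Subtype.dist_eq]
  exact ((hdn n).2.2 x y).2

lemma eventually_gt_of_gammaConvLengths [CompleteSpace X] [LocallyCompactSpace X] (hα : 0 < α)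
    (hdn : ∀ n, MemD α Ω (dn n)) (hd : MemD α Ω d) (hen : ∀ n, IsContExt Ω (dn n) (en n))
    (he : IsContExt Ω d e) (hG : GammaConvLengths en e) (x y : Ω) {a : ℝ} (ha : a < d x y) :
    ∀ᶠ n in atTop, a < dn n x y := by
  by_contra hcon
  obtain ⟨ψ, hψ, hψa⟩ := extraction_of_frequently_atTop
    ((not_eventually.1 hcon).mono fun n h => not_lt.1 h)
  have ha0 : 0 ≤ a := ((hdn (ψ 0)).1.nonneg x y).trans (hψa 0)
  have : CompleteSpace (closure Ω) := isClosed_closure.completeSpace_coe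
  have : LocallyCompactSpace (closure Ω) := isClosed_closure.locallyCompactSpace
  obtain ⟨c, hc⟩ := exists_seq_lipCurveWith_pathLength_le hα hdn hen x y
  obtain ⟨φ, hφ, g, hg, hcg⟩ := exists_subseq_unifConvCurves (f := fun k => c (ψ k))
    (fun k => (hc (ψ k)).1) (fun k => (hc (ψ k)).2.2.1)
  have hg0 : g 0 = inclusion subset_closure x := tendsto_nhds_unique
    (hcg.tendsto (left_mem_Icc.2 zero_le_one)) (by simp only [(hc _).1, tendsto_const_nhds])
  have hg1 : g 1 = inclusion subset_closure y := tendsto_nhds_unique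
    (hcg.tendsto (right_mem_Icc.2 zero_le_one)) (by simp only [(hc _).2.1, tendsto_const_nhds])
  have hbound : Tendsto (fun k => ENNReal.ofReal (a + 1 / ((ψ (φ k) : ℝ) + 1))) atTop
      (𝓝 (ENNReal.ofReal a)) := by
    simpa using ENNReal.tendsto_ofReal (tendsto_const_nhds.add
      (tendsto_one_div_add_atTop_nhds_zero_nat.comp (hψ.comp hφ).tendsto_atTop))
  have : ENNReal.ofReal (d x y) ≤ ENNReal.ofReal a :=
    calc ENNReal.ofReal (d x y) ≤ pathLength e g := by
          simpa [hg0, hg1, he.apply_inclusion, hd.1.1 y x] using ofReal_le_pathLength e g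
      _ ≤ liminf (fun k => pathLength (en (ψ (φ k))) (c (ψ (φ k)))) atTop :=
          hG.pathLength_le_liminf_comp (hψ.comp hφ) (fun k => (hc _).2.2.1.lipCurve)
            hg.lipCurve hcg
      _ ≤ liminf (fun k => ENNReal.ofReal (a + 1 / ((ψ (φ k) : ℝ) + 1))) atTop :=
          liminf_le_liminf (Eventually.of_forall fun k => (hc _).2.2.2.trans
            (ENNReal.ofReal_le_ofReal (by linarith [hψa (φ k)])))
      _ = ENNReal.ofReal a := hbound.liminf_eq
  linarith [(ENNReal.ofReal_le_ofReal_iff ha0).1 this]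

end PointwiseConvergence

theorem tendstoUnifCompactly_of_lipschitzWith {E : Type*} [PseudoMetricSpace E]
    {fn : ℕ → E → E → ℝ} {f : E → E → ℝ} {K : NNReal}
    (hlip : ∀ n, LipschitzWith K (Function.uncurry (fn n)))
    (hf : ∀ x y, Tendsto (fun n => fn n x y) atTop (𝓝 (f x y))) : TendstoUnifCompactly fn f := by
  intro C hC ε hε
  have : CompactSpace C := isCompact_iff_compactSpace.1 hC
  have hequi : Equicontinuous fun n (p : C) => fn n p.1.1 p.1.2 :=
    (LipschitzWith.uniformEquicontinuous _ K fun n => (hlip n).restrict C).equicontinuous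
  have hunif := (hequi.tendsto_uniformFun_iff_pi atTop fun p : C => f p.1.1 p.1.2).2
    (tendsto_pi_nhds.2 fun p => hf _ _)
  obtain ⟨N, hN⟩ := eventually_atTop.1 (Metric.tendstoUniformly_iff.1
    (UniformFun.tendsto_iff_tendstoUniformly.1 hunif) ε hε)
  exact ⟨N, fun n hn p hp => by rw [← Real.dist_eq, dist_comm]; exact hN n hn ⟨p, hp⟩⟩

lemma MemD.lipschitzWith_uncurry {X : Type*} [MetricSpace X] {Ω : Set X} {α : ℝ}
    {d : Ω → Ω → ℝ} (hd : MemD α Ω d) (hα : 0 ≤ α) :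
    LipschitzWith (α.toNNReal + α.toNNReal) (Function.uncurry d) := by
  have hlip (x x' y : Ω) : dist (d x y) (d x' y) ≤ α.toNNReal * dist x x' := by
    rw [Real.coe_toNNReal α hα, Subtype.dist_eq, Real.dist_eq]
    refine abs_sub_le_iff.2 ⟨?_, ?_⟩ <;>
      linarith [hd.1.2.1 x x' y, hd.1.2.1 x' x y, hd.1.1 x x', (hd.2.2 x x').2]
  refine LipschitzWith.uncurry (fun y => LipschitzWith.of_dist_le_mul fun x x' => hlip x x' y)
    fun x => LipschitzWith.of_dist_le_mul fun y y' => ?_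
  rw [hd.1.1 x y, hd.1.1 x y']
  exact hlip y y' x

theorem stmt8_general {X : Type*} [MetricSpace X] [LocallyCompactSpace X] [CompleteSpace X]
    (Ω : Set X) (α : ℝ) (hα : 1 < α)
    (dn : ℕ → Ω → Ω → ℝ) (hdn : ∀ n, MemD α Ω (dn n))
    (d : Ω → Ω → ℝ) (hd : MemD α Ω d)
    (en : ℕ → closure Ω → closure Ω → ℝ) (hen : ∀ n, IsContExt Ω (dn n) (en n))
    (e : closure Ω → closure Ω → ℝ) (he : IsContExt Ω d e)
    (hGamma : GammaConvLengths en e) :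
    TendstoUnifCompactly dn d := by
  have hα0 : 0 < α := zero_lt_one.trans hα
  refine tendstoUnifCompactly_of_lipschitzWith (fun n => (hdn n).lipschitzWith_uncurry hα0.le)
    fun x y => tendsto_order.2 ⟨fun a ha => ?_, fun a ha => ?_⟩
  · exact eventually_gt_of_gammaConvLengths hα0 hdn hd hen he hGamma x y ha
  · exact eventually_lt_of_gammaConvLengths hα0 hdn hd hen he hGamma x y ha

/-- Γ-convergence of the length functionals of the extended distances
implies uniform convergence of the distances on compact subsets of `Ω × Ω`. -/
theorem stmt8 {X : Type*} [MetricSpace X] [LocallyCompactSpace X] [CompleteSpace X]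
    (Ω : Set X) (hΩ : IsOpen Ω) (α : ℝ) (hα : 1 < α)
    (hne : ∃ d₀ : Ω → Ω → ℝ, MemD α Ω d₀)
    (dn : ℕ → Ω → Ω → ℝ) (hdn : ∀ n, MemD α Ω (dn n))
    (d : Ω → Ω → ℝ) (hd : MemD α Ω d)
    (en : ℕ → closure Ω → closure Ω → ℝ) (hen : ∀ n, IsContExt Ω (dn n) (en n))
    (e : closure Ω → closure Ω → ℝ) (he : IsContExt Ω d e)
    (hGamma : GammaConvLengths en e) :
    TendstoUnifCompactly dn d :=
  stmt8_general Ω α hα dn hdn d hd en hen e he hGamma
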